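/- arXiv:1412.3633 — 4 statements merged into one kernel-verified Lean document; each statement's English description precedes it below -/
import Mathlib

section
/- For every theory Σ and every M ⊆ T_Y, the semantic closure satisfies [M]_Σ = ⋃{[N]_Σ | N is a finite subset of M}; in particular, Mod(Σ) is an algebraic closure system. -/
namespace TAI

variable {Y : Type*}

/-- Time shift of a set of time-annotated attributes: `M + j`. -/
def shiftS (M : Set (Y × ℤ)) (j : ℤ) : Set (Y × ℤ) :=
  (fun p : Y × ℤ => (p.1, p.2 + j)) '' M

/-- Time shift of a finite set of time-annotated attributes: `A + j`. -/
def shiftF [DecidableEq Y] (A : Finset (Y × ℤ)) (j : ℤ) : Finset (Y × ℤ) :=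
  A.image (fun p => (p.1, p.2 + j))

/-- An attribute implication over `Y` annotated by time points: a pair
`(A, B)` of finite subsets of `T_Y = Y × ℤ`, read as `A ⇒ B`. -/
abbrev Fml (Y : Type*) := Finset (Y × ℤ) × Finset (Y × ℤ)

/-- `A ⇒ B` is true in `M ⊆ T_Y`: for every `i ∈ ℤ`, `A + i ⊆ M` implies `B + i ⊆ M`. -/
def Holds [DecidableEq Y] (M : Set (Y × ℤ)) (φ : Fml Y) : Prop :=
  ∀ i : ℤ, ↑(shiftF φ.1 i) ⊆ M → ↑(shiftF φ.2 i) ⊆ M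

/-- The models of a theory `T`. -/
def Mods [DecidableEq Y] (T : Set (Fml Y)) : Set (Set (Y × ℤ)) :=
  {M | ∀ φ ∈ T, Holds M φ}

/-- Semantic entailment: `T ⊨ φ`. -/
def Entails [DecidableEq Y] (T : Set (Fml Y)) (φ : Fml Y) : Prop :=
  ∀ M ∈ Mods T, Holds M φ

/-- Semantic closure `[M]_Σ`. -/
def semClos [DecidableEq Y] (T : Set (Fml Y)) (M : Set (Y × ℤ)) : Set (Y × ℤ) :=
  ⋂₀ {N | N ∈ Mods T ∧ M ⊆ N}

/-- Classical (time-point-free) truth: `M ⊨_PL A ⇒ B` iff `A ⊆ M` implies `B ⊆ M`. -/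
def HoldsPL (M : Set (Y × ℤ)) (φ : Fml Y) : Prop :=
  ↑φ.1 ⊆ M → ↑φ.2 ⊆ M

/-- Classical models. -/
def ModsPL (T : Set (Fml Y)) : Set (Set (Y × ℤ)) :=
  {M | ∀ φ ∈ T, HoldsPL M φ}

/-- Classical semantic entailment `⊨_PL`. -/
def EntailsPL (T : Set (Fml Y)) (φ : Fml Y) : Prop :=
  ∀ M ∈ ModsPL T, HoldsPL M φ

/-- `Σ^PL = {A + i ⇒ B + i | A ⇒ B ∈ Σ, i ∈ ℤ}`. -/
def shiftAll [DecidableEq Y] (T : Set (Fml Y)) : Set (Fml Y) :=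
  {ψ | ∃ φ ∈ T, ∃ i : ℤ, ψ = (shiftF φ.1 i, shiftF φ.2 i)}

/-- One step of the syntactic closure construction. -/
def synStep [DecidableEq Y] (T : Set (Fml Y)) (M : Set (Y × ℤ)) : Set (Y × ℤ) :=
  M ∪ ⋃₀ {S | ∃ φ ∈ T, ∃ i : ℤ, ↑(shiftF φ.1 i) ⊆ M ∧ S = (↑(shiftF φ.2 i) : Set (Y × ℤ))}

/-- `M_Σ^n`. -/
def synIter [DecidableEq Y] (T : Set (Fml Y)) (M : Set (Y × ℤ)) : ℕ → Set (Y × ℤ)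
  | 0 => M
  | n + 1 => synStep T (synIter T M n)

/-- The syntactic closure `M_Σ^ω`. -/
def synClos [DecidableEq Y] (T : Set (Fml Y)) (M : Set (Y × ℤ)) : Set (Y × ℤ) :=
  ⋃ n : ℕ, synIter T M n

/-- Provability from `T` using the rules (Ax), (Cut) and (Shf). -/
inductive Prov [DecidableEq Y] (T : Set (Fml Y)) : Fml Y → Prop
  | hyp {φ : Fml Y} : φ ∈ T → Prov T φ
  | ax (A B : Finset (Y × ℤ)) : Prov T (A ∪ B, A)
  | cut {A B C D : Finset (Y × ℤ)} :
      Prov T (A, B) → Prov T (B ∪ C, D) → Prov T (A ∪ C, D)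
  | shf {A B : Finset (Y × ℤ)} (i : ℤ) :
      Prov T (A, B) → Prov T (shiftF A i, shiftF B i)

/-- Provability from `T` using only the rules (Ax) and (Cut) (no time shifts). -/
inductive ProvAC [DecidableEq Y] (T : Set (Fml Y)) : Fml Y → Prop
  | hyp {φ : Fml Y} : φ ∈ T → ProvAC T φ
  | ax (A B : Finset (Y × ℤ)) : ProvAC T (A ∪ B, A)
  | cut {A B C D : Finset (Y × ℤ)} :
      ProvAC T (A, B) → ProvAC T (B ∪ C, D) → ProvAC T (A ∪ C, D)

/-- Provability from `T` using the rules (Ax) and (Cut_i). -/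
inductive ProvCuti [DecidableEq Y] (T : Set (Fml Y)) : Fml Y → Prop
  | hyp {φ : Fml Y} : φ ∈ T → ProvCuti T φ
  | ax (A B : Finset (Y × ℤ)) : ProvCuti T (A ∪ B, A)
  | cuti {A B C D : Finset (Y × ℤ)} (i : ℤ) :
      ProvCuti T (A, shiftF B i) → ProvCuti T (B ∪ C, D) →
      ProvCuti T (A ∪ shiftF C i, shiftF D i)

/-- Provability from `T` using the rules (Ref) and (Sim_i). -/
inductive ProvRS [DecidableEq Y] (T : Set (Fml Y)) : Fml Y → Prop
  | hyp {φ : Fml Y} : φ ∈ T → ProvRS T φ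
  | ref (A : Finset (Y × ℤ)) : ProvRS T (A, A)
  | simi {A B C D : Finset (Y × ℤ)} (i : ℤ) :
      ProvRS T (A, shiftF B i) → ProvRS T (C, D) →
      ProvRS T (A ∪ shiftF (C \ B) i, shiftF D i)

/-- The closure operator induced by a closure system `S`. -/
def closOp (S : Set (Set (Y × ℤ))) (M : Set (Y × ℤ)) : Set (Y × ℤ) :=
  ⋂₀ {N | N ∈ S ∧ M ⊆ N}

/-- The least time point occurring in a finite set (`0` for the empty set). -/
def lo (A : Finset (Y × ℤ)) : ℤ :=
  WithTop.untopD 0 (A.image Prod.snd).min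

/-- The greatest time point occurring in a finite set (`0` for the empty set). -/
def hi (A : Finset (Y × ℤ)) : ℤ :=
  WithBot.unbotD 0 (A.image Prod.snd).max

/-- A formula `A ⇒ B` is predictive if `A ≠ ∅`, `B ≠ ∅`, and every time point in
`A` is less than or equal to every time point in `B`. -/
def Predictive (φ : Fml Y) : Prop :=
  φ.1.Nonempty ∧ φ.2.Nonempty ∧ ∀ p ∈ φ.1, ∀ q ∈ φ.2, p.2 ≤ q.2

/-! Every implication has a finite premise, so a directed union of models is again a model.
The closures of the finite subsets of `M` form such a directed family, and its union contains `M`;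
hence it contains `[M]_Σ`, while each member lies in `[M]_Σ` by monotonicity. -/

section

variable [DecidableEq Y] (T : Set (Fml Y))

lemma sUnion_mem_mods {c : Set (Set (Y × ℤ))} (hne : c.Nonempty)
    (hdir : DirectedOn (· ⊆ ·) c) (hc : c ⊆ Mods T) : ⋃₀ c ∈ Mods T := by
  intro φ hφ i hA
  obtain ⟨P, hPc, hAP⟩ := hdir.exists_mem_subset_of_finite_of_subset_sUnion hne
    (Finset.finite_toSet _) hA
  exact (hc hPc φ hφ i hAP).trans (Set.subset_sUnion_of_mem hPc)

lemma subset_semClos (M : Set (Y × ℤ)) : M ⊆ semClos T M :=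
  fun _ hx _ hP => hP.2 hx

lemma semClos_mono {M M' : Set (Y × ℤ)} (h : M ⊆ M') : semClos T M ⊆ semClos T M' :=
  fun _ hx P hP => hx P ⟨hP.1, h.trans hP.2⟩

lemma semClos_subset_of_mem_mods {M N : Set (Y × ℤ)} (hN : N ∈ Mods T) (hMN : M ⊆ N) :
    semClos T M ⊆ N :=
  Set.sInter_subset_of_mem ⟨hN, hMN⟩

lemma semClos_mem_mods (M : Set (Y × ℤ)) : semClos T M ∈ Mods T :=
  fun φ hφ i hA _ hx P hP => hP.1 φ hφ i (fun _ hy => hA hy P hP) hx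

lemma directedOn_semClos_finset (M : Set (Y × ℤ)) :
    DirectedOn (· ⊆ ·) {P | ∃ N : Finset (Y × ℤ), ↑N ⊆ M ∧ P = semClos T ↑N} := by
  rintro _ ⟨N₁, hN₁, rfl⟩ _ ⟨N₂, hN₂, rfl⟩
  refine ⟨semClos T ↑(N₁ ∪ N₂), ⟨N₁ ∪ N₂, ?_, rfl⟩, semClos_mono T ?_, semClos_mono T ?_⟩
  · simpa using Set.union_subset hN₁ hN₂
  · simp
  · simp

end

theorem semClos_algebraic_general [DecidableEq Y]
    (T : Set (Fml Y)) (M : Set (Y × ℤ)) :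
    semClos T M = ⋃₀ {P | ∃ N : Finset (Y × ℤ), ↑N ⊆ M ∧ P = semClos T ↑N} := by
  set U := ⋃₀ {P | ∃ N : Finset (Y × ℤ), ↑N ⊆ M ∧ P = semClos T ↑N}
  have hM : M ⊆ U := fun x hx =>
    ⟨semClos T ↑({x} : Finset (Y × ℤ)), ⟨{x}, by simpa using hx, rfl⟩,
      subset_semClos T _ (by simp)⟩
  have hU : U ∈ Mods T := by
    refine sUnion_mem_mods T ⟨_, ∅, by simp, rfl⟩
      (directedOn_semClos_finset T M) ?_
    rintro _ ⟨N, -, rfl⟩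
    exact semClos_mem_mods T ↑N
  refine (semClos_subset_of_mem_mods T hU hM).antisymm ?_
  rintro x ⟨_, ⟨N, hNM, rfl⟩, hx⟩
  exact semClos_mono T hNM hx

/-- The semantic closure satisfies
`[M]_Σ = ⋃ {[N]_Σ | N finite, N ⊆ M}`; i.e. `Mod(Σ)` is an algebraic
closure system. -/
theorem semClos_algebraic [DecidableEq Y] [Fintype Y] [Nonempty Y]
    (T : Set (Fml Y)) (M : Set (Y × ℤ)) :
    semClos T M = ⋃₀ {P | ∃ N : Finset (Y × ℤ), ↑N ⊆ M ∧ P = semClos T ↑N} :=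
  semClos_algebraic_general T M

end TAI
end

section
/- Let S ⊆ 2^{T_Y} be an algebraic closure system that is closed under time shifts. Then there exists a theory Σ (a set of attribute implications over Y annotated by time points) such that S = Mod(Σ). -/
namespace TAI

variable {Y : Type*}

/-! An algebraic closure system is determined by the pairs `(N, x)` with `N` finite and
`x ∈ C_S(N)`; closure under shifts makes each such pair a valid implication `N ⇒ {x}` in every
member of `S`. So `S` is axiomatized by all implications `A ⇒ B` with `B ⊆ C_S(A)`. -/

section ClosureOperator

variable (S : Set (Set (Y × ℤ)))

lemma subset_closOp (M : Set (Y × ℤ)) : M ⊆ closOp S M :=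
  fun _ hx _ hN => hN.2 hx

lemma closOp_subset_of_mem {M N : Set (Y × ℤ)} (hN : N ∈ S) (hMN : M ⊆ N) :
    closOp S M ⊆ N :=
  Set.sInter_subset_of_mem ⟨hN, hMN⟩

lemma closOp_mem (hinter : ∀ 𝓐 ⊆ S, ⋂₀ 𝓐 ∈ S) (M : Set (Y × ℤ)) : closOp S M ∈ S :=
  hinter _ fun _ hN => hN.1

end ClosureOperator

section Shift

lemma shiftS_neg (M : Set (Y × ℤ)) (i : ℤ) :
    shiftS M (-i) = (fun p : Y × ℤ => (p.1, p.2 + i)) ⁻¹' M := by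
  ext ⟨y, t⟩
  constructor
  · rintro ⟨⟨y', t'⟩, hm, he⟩
    obtain ⟨rfl, rfl⟩ := Prod.mk.inj he
    simpa using hm
  · intro hm
    exact ⟨(y, t + i), hm, by simp⟩

lemma shiftS_subset_iff {A M : Set (Y × ℤ)} {i : ℤ} :
    shiftS A i ⊆ M ↔ A ⊆ shiftS M (-i) := by
  rw [shiftS_neg, shiftS, Set.image_subset_iff]

variable [DecidableEq Y]

lemma coe_shiftF (A : Finset (Y × ℤ)) (i : ℤ) :
    (↑(shiftF A i) : Set (Y × ℤ)) = shiftS (↑A) i := by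
  simp [shiftF, shiftS]

lemma shiftF_zero (A : Finset (Y × ℤ)) : shiftF A 0 = A := by
  ext p; simp [shiftF]

lemma holds_iff {M : Set (Y × ℤ)} {φ : Fml Y} :
    Holds M φ ↔ ∀ i : ℤ, ↑φ.1 ⊆ shiftS M (-i) → ↑φ.2 ⊆ shiftS M (-i) := by
  simp only [Holds, coe_shiftF, shiftS_subset_iff]

lemma Holds.of_subset {M : Set (Y × ℤ)} {φ : Fml Y} (h : Holds M φ) (hM : ↑φ.1 ⊆ M) :
    ↑φ.2 ⊆ M := by
  simpa only [shiftF_zero] using h 0 (by rwa [shiftF_zero])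

end Shift

section ClosTheory

variable [DecidableEq Y]

def closTheory (S : Set (Set (Y × ℤ))) : Set (Fml Y) :=
  {φ | ↑φ.2 ⊆ closOp S ↑φ.1}

lemma mem_Mods_closTheory {S : Set (Set (Y × ℤ))}
    (hshift : ∀ M ∈ S, ∀ i : ℤ, shiftS M i ∈ S) {M : Set (Y × ℤ)} (hM : M ∈ S) :
    M ∈ Mods (closTheory S) := fun _ hφ =>
  holds_iff.2 fun i hA => hφ.trans (closOp_subset_of_mem S (hshift M hM (-i)) hA)

lemma closOp_subset_of_mem_Mods_closTheory {S : Set (Set (Y × ℤ))}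
    (halg : ∀ M : Set (Y × ℤ),
      closOp S M = ⋃₀ {P | ∃ N : Finset (Y × ℤ), ↑N ⊆ M ∧ P = closOp S ↑N})
    {M : Set (Y × ℤ)} (hM : M ∈ Mods (closTheory S)) : closOp S M ⊆ M := by
  rw [halg M]
  rintro x ⟨_, ⟨N, hNM, rfl⟩, hx⟩
  have hNx : ((N, {x}) : Fml Y) ∈ closTheory S := by
    simpa [closTheory] using hx
  simpa using (hM _ hNx).of_subset hNM

end ClosTheory

theorem algebraic_shift_closed_is_mods_general [DecidableEq Y]
    (S : Set (Set (Y × ℤ)))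
    (hinter : ∀ 𝓐 ⊆ S, ⋂₀ 𝓐 ∈ S)
    (halg : ∀ M : Set (Y × ℤ),
      closOp S M = ⋃₀ {P | ∃ N : Finset (Y × ℤ), ↑N ⊆ M ∧ P = closOp S ↑N})
    (hshift : ∀ M ∈ S, ∀ i : ℤ, shiftS M i ∈ S) :
    ∃ T : Set (Fml Y), S = Mods T := by
  refine ⟨closTheory S, Set.ext fun M => ⟨mem_Mods_closTheory hshift, fun hM => ?_⟩⟩
  have hclosed : closOp S M = M :=
    (closOp_subset_of_mem_Mods_closTheory halg hM).antisymm (subset_closOp S M)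
  exact hclosed ▸ closOp_mem S hinter M

/-- Every algebraic closure system closed under time shifts is
the system of models of some theory. -/
theorem algebraic_shift_closed_is_mods [DecidableEq Y] [Fintype Y] [Nonempty Y]
    (S : Set (Set (Y × ℤ)))
    (hinter : ∀ 𝓐 ⊆ S, ⋂₀ 𝓐 ∈ S)
    (halg : ∀ M : Set (Y × ℤ),
      closOp S M = ⋃₀ {P | ∃ N : Finset (Y × ℤ), ↑N ⊆ M ∧ P = closOp S ↑N})
    (hshift : ∀ M ∈ S, ∀ i : ℤ, shiftS M i ∈ S) :
    ∃ T : Set (Fml Y), S = Mods T :=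
  algebraic_shift_closed_is_mods_general S hinter halg hshift

end TAI
end

section
/- (Soundness) For every theory Σ and every attribute implication A ⇒ B annotated by time points, if Σ ⊢ A ⇒ B then Σ ⊨ A ⇒ B. -/
namespace TAI

variable {Y : Type*}

lemma shiftF_union [DecidableEq Y] (A B : Finset (Y × ℤ)) (i : ℤ) :
    shiftF (A ∪ B) i = shiftF A i ∪ shiftF B i :=
  Finset.image_union _ _

lemma shiftF_shiftF [DecidableEq Y] (A : Finset (Y × ℤ)) (i j : ℤ) :
    shiftF (shiftF A i) j = shiftF A (i + j) := by
  simp only [shiftF, Finset.image_image, Function.comp_def, add_assoc]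

section Holds

variable [DecidableEq Y] {M : Set (Y × ℤ)}

lemma holds_union_left (A B : Finset (Y × ℤ)) : Holds M (A ∪ B, A) := by
  intro i h
  rw [shiftF_union, Finset.coe_union] at h
  exact Set.union_subset_iff.mp h |>.1

lemma Holds.cut {A B C D : Finset (Y × ℤ)} (hAB : Holds M (A, B)) (hBCD : Holds M (B ∪ C, D)) :
    Holds M (A ∪ C, D) := by
  intro i h
  rw [shiftF_union, Finset.coe_union, Set.union_subset_iff] at h
  exact hBCD i <| by
    rw [shiftF_union, Finset.coe_union]
    exact Set.union_subset (hAB i h.1) h.2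

lemma Holds.shiftF {A B : Finset (Y × ℤ)} (hAB : Holds M (A, B)) (i : ℤ) :
    Holds M (TAI.shiftF A i, TAI.shiftF B i) := by
  intro j h
  rw [shiftF_shiftF] at h ⊢
  exact hAB (i + j) h

lemma Prov.holds {T : Set (Fml Y)} {φ : Fml Y} (h : Prov T φ) (hM : M ∈ Mods T) : Holds M φ := by
  induction h with
  | hyp hφ => exact hM _ hφ
  | ax A B => exact holds_union_left A B
  | cut _ _ ihAB ihBCD => exact ihAB.cut ihBCD
  | shf i _ ih => exact ih.shiftF i

end Holds

theorem soundness_general [DecidableEq Y]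
    (T : Set (Fml Y)) (A B : Finset (Y × ℤ)) :
    Prov T (A, B) → Entails T (A, B) :=
  fun h _ hM => h.holds hM

/-- Soundness: if `Σ ⊢ A ⇒ B` then `Σ ⊨ A ⇒ B`. -/
theorem soundness [DecidableEq Y] [Fintype Y] [Nonempty Y]
    (T : Set (Fml Y)) (A B : Finset (Y × ℤ)) :
    Prov T (A, B) → Entails T (A, B) :=
  soundness_general T A B

end TAI
end

section
/- For every theory Σ and every M ⊆ T_Y, the semantic closure and the syntactic closure coincide: [M]_Σ = M_Σ^ω. -/
namespace TAI

variable {Y : Type*}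

theorem synIter_mono [DecidableEq Y] (T : Set (Fml Y)) (M : Set (Y × ℤ)) :
    Monotone (synIter T M) :=
  monotone_nat_of_le_succ fun _ => Set.subset_union_left

theorem subset_synClos [DecidableEq Y] (T : Set (Fml Y)) (M : Set (Y × ℤ)) :
    M ⊆ synClos T M :=
  Set.subset_iUnion (synIter T M) 0

theorem shiftF_snd_subset_synStep [DecidableEq Y] {T : Set (Fml Y)} {S : Set (Y × ℤ)}
    {φ : Fml Y} (hφ : φ ∈ T) {i : ℤ} (h : ↑(shiftF φ.1 i) ⊆ S) :
    ↑(shiftF φ.2 i) ⊆ synStep T S :=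
  fun _ hx => Or.inr ⟨_, ⟨φ, hφ, i, h, rfl⟩, hx⟩

theorem synStep_subset_of_mem_Mods [DecidableEq Y] {T : Set (Fml Y)} {S N : Set (Y × ℤ)}
    (hN : N ∈ Mods T) (hSN : S ⊆ N) : synStep T S ⊆ N := by
  rintro x (hxS | ⟨_, ⟨φ, hφ, i, hsub, rfl⟩, hx⟩)
  · exact hSN hxS
  · exact hN φ hφ i (hsub.trans hSN) hx

theorem synIter_subset_of_mem_Mods [DecidableEq Y] {T : Set (Fml Y)} {M N : Set (Y × ℤ)}
    (hN : N ∈ Mods T) (hMN : M ⊆ N) (n : ℕ) : synIter T M n ⊆ N := by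
  induction n with
  | zero => exact hMN
  | succ n ih => exact synStep_subset_of_mem_Mods hN ih

theorem synClos_subset_of_mem_Mods [DecidableEq Y] {T : Set (Fml Y)} {M N : Set (Y × ℤ)}
    (hN : N ∈ Mods T) (hMN : M ⊆ N) : synClos T M ⊆ N :=
  Set.iUnion_subset (synIter_subset_of_mem_Mods hN hMN)

/- The premise `A + i` is finite and the stages `M_Σ^n` increase, so it already lies in a single
stage. -/
theorem synClos_mem_Mods [DecidableEq Y] (T : Set (Fml Y)) (M : Set (Y × ℤ)) :
    synClos T M ∈ Mods T := by
  intro φ hφ i hsub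
  obtain ⟨n, hn⟩ :=
    (synIter_mono T M).directed_le.exists_mem_subset_of_finset_subset_biUnion hsub
  exact (shiftF_snd_subset_synStep hφ hn).trans (Set.subset_iUnion (synIter T M) (n + 1))

theorem semClos_eq_synClos_general [DecidableEq Y]
    (T : Set (Fml Y)) (M : Set (Y × ℤ)) :
    semClos T M = synClos T M :=
  subset_antisymm
    (Set.sInter_subset_of_mem ⟨synClos_mem_Mods T M, subset_synClos T M⟩)
    (Set.subset_sInter fun _ ⟨hN, hMN⟩ => synClos_subset_of_mem_Mods hN hMN)

/-- the semantic and syntactic closures coincide: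
`[M]_Σ = M_Σ^ω`. -/
theorem semClos_eq_synClos [DecidableEq Y] [Fintype Y] [Nonempty Y]
    (T : Set (Fml Y)) (M : Set (Y × ℤ)) :
    semClos T M = synClos T M :=
  semClos_eq_synClos_general T M

end TAI
end
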